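/- arXiv:2301.07589 — 5 statements merged into one kernel-verified Lean document; each statement's English description precedes it below -/
import Mathlib

section
/- If a group G contains a subgroup H of finite index isomorphic to ℤ^n × F_m (for some n, m ≥ 0), then G contains a normal subgroup H' of finite index with H' isomorphic to ℤ^{n'} × F_{m'} for some natural numbers n', m'. -/
/-!
The normal core of `H` has finite index and lies in `H`, so it is a finite-index subgroup `K` of
`ℤ^n × F_m`, and it suffices to show that `K` is again of this form. By Schreier `K` is finitely
generated, so its projection `Q` to `F_m` is a finitely generated free group (Nielsen–Schreier),
i.e. some `F_{m'}`. As `Q` is free, the projection `K → Q` splits, and its kernel `K ∩ ℤ^n` is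
central, so `K ≅ (K ∩ ℤ^n) × Q`; finally `K ∩ ℤ^n ≅ ℤ^{n'}` since subgroups of `ℤ^n` are free.
-/

open Function Subgroup

theorem FreeGroup.finite_of_fg {S : Type*} [Group.FG (FreeGroup S)] : Finite S := by
  have : Group.FG (Abelianization (FreeGroup S)) := QuotientGroup.fg _
  have : AddGroup.FG (FreeAbelianGroup S) := AddGroup.fg_of_group_fg (G := Abelianization _)
  have : Module.Finite ℤ (FreeAbelianGroup S) := Module.Finite.iff_addGroup_fg.mpr this
  exact Module.Finite.finite_basis (FreeAbelianGroup.basis S)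

theorem IsFreeGroup.exists_mulEquiv_freeGroup_fin (F : Type*) [Group F] [IsFreeGroup F]
    [Group.FG F] : ∃ m, Nonempty (F ≃* FreeGroup (Fin m)) := by
  let e := IsFreeGroup.toFreeGroup F
  have : Group.FG (FreeGroup (IsFreeGroup.Generators F)) :=
    Group.fg_of_surjective (f := e.toMonoidHom) e.surjective
  have : Finite (IsFreeGroup.Generators F) := FreeGroup.finite_of_fg
  exact ⟨_, ⟨e.trans (FreeGroup.freeGroupCongr (Finite.equivFin _))⟩⟩

theorem exists_mulEquiv_multiplicative_fin_int_of_injective {C : Type*} [Group C] {n : ℕ}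
    (f : C →* Multiplicative (Fin n → ℤ)) (hf : Injective f) :
    ∃ n', Nonempty (C ≃* Multiplicative (Fin n' → ℤ)) := by
  let g : Additive C →+ (Fin n → ℤ) := MonoidHom.toAdditiveLeft f
  obtain ⟨n', b⟩ := Submodule.basisOfPid (Pi.basisFun ℤ (Fin n)) g.range.toIntSubmodule
  exact ⟨n', ⟨AddEquiv.toMultiplicativeRight
    ((AddMonoidHom.ofInjective hf).trans b.equivFun.toAddEquiv)⟩⟩

theorem MonoidHom.exists_comp_eq_id_of_isFreeGroup {K Q : Type*} [Group K] [Group Q]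
    [IsFreeGroup Q] (f : K →* Q) (hf : Surjective f) : ∃ s : Q →* K, f.comp s = .id Q := by
  choose t ht using fun a : IsFreeGroup.Generators Q => hf (IsFreeGroup.of a)
  exact ⟨IsFreeGroup.lift t, IsFreeGroup.ext_hom fun a => by simp [IsFreeGroup.lift_of, ht]⟩

theorem MonoidHom.nonempty_mulEquiv_ker_prod {K Q : Type*} [Group K] [Group Q] (f : K →* Q)
    (s : Q →* K) (hs : f.comp s = .id Q) (hker : f.ker ≤ center K) :
    Nonempty (K ≃* f.ker × Q) := by
  have hfs (q : Q) : f (s q) = q := DFunLike.congr_fun hs q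
  let φ : f.ker × Q →* K := MonoidHom.noncommCoprod f.ker.subtype s fun c q =>
    (mem_center_iff.mp (hker c.2) (s q)).symm
  have hφ (c : f.ker) (q : Q) : φ (c, q) = c * s q := rfl
  refine ⟨(MulEquiv.ofBijective φ ⟨(injective_iff_map_eq_one φ).mpr ?_, fun k => ?_⟩).symm⟩
  · rintro ⟨c, q⟩ h
    rw [hφ] at h
    have hq : q = 1 := by simpa [mem_ker.mp c.2, hfs] using congrArg f h
    subst hq
    simp only [map_one, mul_one, OneMemClass.coe_eq_one] at h
    simp [h]
  · refine ⟨(⟨k * (s (f k))⁻¹, by simp [hfs]⟩, f k), ?_⟩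
    simp [hφ]

theorem Subgroup.fg_of_le_of_finiteIndex {G : Type*} [Group G] {H K : Subgroup G} (hle : K ≤ H)
    [Group.FG H] [K.FiniteIndex] : Group.FG K :=
  Group.fg_of_surjective (f := (subgroupOfEquivOfLe hle).toMonoidHom)
    (subgroupOfEquivOfLe hle).surjective

theorem exists_mulEquiv_int_prod_freeGroup_of_injective {K F : Type*} [Group K] [Group.FG K]
    [Group F] [IsFreeGroup F] {n : ℕ} (ι : K →* Multiplicative (Fin n → ℤ) × F)
    (hι : Injective ι) :
    ∃ n' m', Nonempty (K ≃* Multiplicative (Fin n' → ℤ) × FreeGroup (Fin m')) := by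
  let π := (MonoidHom.snd _ F).comp ι
  have mem_ker_iff (k : K) : k ∈ π.rangeRestrict.ker ↔ (ι k).2 = 1 := by
    rw [MonoidHom.ker_rangeRestrict]; rfl
  have hker : π.rangeRestrict.ker ≤ center K := fun k hk => mem_center_iff.mpr fun g => hι <| by
    ext <;> simp [mul_comm, (mem_ker_iff k).mp hk]
  have hfst : Injective ((MonoidHom.fst _ F).comp (ι.comp π.rangeRestrict.ker.subtype)) := by
    refine (injective_iff_map_eq_one _).mpr fun c hc => Subtype.ext (hι ?_)
    exact Prod.ext (by simpa using hc) (by simpa using (mem_ker_iff c).mp c.2)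
  obtain ⟨s, hs⟩ := π.rangeRestrict.exists_comp_eq_id_of_isFreeGroup π.rangeRestrict_surjective
  obtain ⟨e⟩ := π.rangeRestrict.nonempty_mulEquiv_ker_prod s hs hker
  obtain ⟨n', ⟨eA⟩⟩ := exists_mulEquiv_multiplicative_fin_int_of_injective _ hfst
  obtain ⟨m', ⟨eF⟩⟩ := IsFreeGroup.exists_mulEquiv_freeGroup_fin π.range
  exact ⟨n', m', ⟨e.trans (eA.prodCongr eF)⟩⟩

/-- If a group `G` contains a finite-index subgroup `H` isomorphic to `ℤ^n × F_m`, then `G`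
contains a finite-index *normal* subgroup `H'` isomorphic to `ℤ^{n'} × F_{m'}` for some
natural numbers `n'`, `m'`. -/
theorem exists_normal_finiteIndex_ZnxFm {G : Type} [Group G] (n m : ℕ)
    (H : Subgroup G) (hfin : H.FiniteIndex)
    (hiso : Nonempty (H ≃* Multiplicative (Fin n → ℤ) × FreeGroup (Fin m))) :
    ∃ (H' : Subgroup G) (n' m' : ℕ), H'.Normal ∧ H'.FiniteIndex ∧
      Nonempty (H' ≃* Multiplicative (Fin n' → ℤ) × FreeGroup (Fin m')) := by
  obtain ⟨e⟩ := hiso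
  have : Group.FG H := Group.fg_of_surjective (f := e.symm.toMonoidHom) e.symm.surjective
  have hle : H.normalCore ≤ H := H.normalCore_le
  have : Group.FG H.normalCore := Subgroup.fg_of_le_of_finiteIndex hle
  obtain ⟨n', m', hN⟩ := exists_mulEquiv_int_prod_freeGroup_of_injective
    (e.toMonoidHom.comp (inclusion hle)) (e.injective.comp (inclusion_injective hle))
  exact ⟨H.normalCore, n', m', H.normalCore_normal, H.finiteIndex_normalCore, hN⟩
end

section
/- Let R ⊆ Σ* be a regular language over an alphabet Σ = {a_1,...,a_n}, and let f(x_1,...,x_n,z) = Σ_{k_1,...,k_n ∈ ℕ} c(k_1,...,k_n) x_1^{k_1}···x_n^{k_n} z^{k_1+···+k_n}, where c(k_1,...,k_n) is the number of words in R that contain exactly k_i occurrences of the letter a_i for each i. Then f(x_1,...,x_n,z) is an ℕ-rational power series. -/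
/-- The class of ℕ-rational multivariate power series: the smallest class of power series in
`ℕ[[x]]` containing the polynomials and closed under addition, multiplication and
quasi-inverse `h ↦ 1/(1-h)` (for `h` with zero constant term, `g = 1/(1-h)` is the unique
series with `g = 1 + h * g`). -/
inductive MvPowerSeries.IsNRational {σ : Type} : MvPowerSeries σ ℕ → Prop
  | poly (P : MvPolynomial σ ℕ) : MvPowerSeries.IsNRational (P : MvPowerSeries σ ℕ)
  | add {f g : MvPowerSeries σ ℕ} : MvPowerSeries.IsNRational f →
      MvPowerSeries.IsNRational g → MvPowerSeries.IsNRational (f + g)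
  | mul {f g : MvPowerSeries σ ℕ} : MvPowerSeries.IsNRational f →
      MvPowerSeries.IsNRational g → MvPowerSeries.IsNRational (f * g)
  | quasiInv {h g : MvPowerSeries σ ℕ} : MvPowerSeries.IsNRational h →
      MvPowerSeries.constantCoeff (σ := σ) (R := ℕ) h = 0 → g = 1 + h * g →
      MvPowerSeries.IsNRational g

/-- The multivariate generating function of a language `R` over the alphabet `Fin n`, in
variables `x_1, …, x_n` (indexed by `some i`) and `z` (indexed by `none`): the coefficient of
`x_1^{k_1} ⋯ x_n^{k_n} z^ℓ` counts the words of `R` of length `ℓ` containing exactly `k_i`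
occurrences of the letter `i` for each `i`. -/
noncomputable def langGenFun (n : ℕ) (R : Language (Fin n)) :
    MvPowerSeries (Option (Fin n)) ℕ :=
  fun d => Nat.card {w : List (Fin n) //
    w ∈ R ∧ (∀ i : Fin n, w.count i = d (some i)) ∧ w.length = d none}

/-!
Fix a DFA for `R` and let `P_S(p, T)` be the set of nonempty words leading from `p` into `T` whose
intermediate states all lie in `S`. Cutting a word at its first intermediate visit to `s ∉ S` gives
  `P_{S+s}(p, T) = P_S(p, T) ⊔ P_S(p, {s}) · P_{S+s}(s, T)`,
a disjoint union, and an unambiguous product because `P_S(p, {s})` is a prefix code. So the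
generating series satisfy the same identity. For `p = s` it is an equation `k = b + a k`, which
Arden's rule solves as `k = a^* b`, with `a^* = 1 + g(P_{S+s}(s, {s}))` again given by the identity.
Induction on `S` from `P_∅(p, T)` (single letters, a polynomial) shows that all these series are
ℕ-rational; finally `R` is the disjoint union of `R ∩ {ε}` and `P_Q(start, F)`, for the state set
`Q` and the accepting states `F`.
-/

instance MvPowerSeries.instIsRightCancelAdd {σ R : Type*} [AddCommMonoid R] [IsRightCancelAdd R] :
    IsRightCancelAdd (MvPowerSeries σ R) :=
  inferInstanceAs (IsRightCancelAdd ((σ →₀ ℕ) → R))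

/-- Arden's rule. -/
theorem eq_mul_of_eq_add_mul {R : Type*} [CommSemiring R] [IsRightCancelAdd R] {a b c k : R}
    (hc : c = 1 + a * c) (hk : k = b + a * k) : k = c * b := by
  refine (add_right_cancel (b := a * c * k) ?_).symm
  calc c * b + a * c * k = c * (b + a * k) := by ring
    _ = (1 + a * c) * k := by rw [← hk, ← hc]
    _ = k + a * c * k := by ring

theorem MvPowerSeries.IsNRational.of_eq_add_mul {σ : Type} {a b c k : MvPowerSeries σ ℕ}
    (ha : a.IsNRational) (ha₀ : constantCoeff a = 0) (hb : b.IsNRational) (hc : c = 1 + a * c)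
    (hk : k = b + a * k) : k.IsNRational :=
  eq_mul_of_eq_add_mul hc hk ▸ (quasiInv ha ha₀ hc).mul hb

namespace List

variable {α : Type*} [DecidableEq α] [Finite α]

/-- The exponent of the monomial of `w`: the variable `some a` counts the letter `a`, the
variable `none` counts the length. -/
noncomputable def letterWeight (w : List α) : Option α →₀ ℕ :=
  Finsupp.equivFunOnFinite.symm fun o => o.elim w.length w.count

theorem letterWeight_eq_iff {w : List α} {d : Option α →₀ ℕ} :
    w.letterWeight = d ↔ (∀ a, w.count a = d (some a)) ∧ w.length = d none := by
  rw [Finsupp.ext_iff, Option.forall, and_comm]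
  rfl

theorem letterWeight_append (u v : List α) :
    (u ++ v).letterWeight = u.letterWeight + v.letterWeight := by
  ext (_ | a) <;> simp [letterWeight, List.count_append]

theorem eq_nil_of_letterWeight_eq_zero {w : List α} (h : w.letterWeight = 0) : w = [] :=
  List.length_eq_zero_iff.mp (letterWeight_eq_iff.mp h).2

theorem finite_setOf_letterWeight_eq (d : Option α →₀ ℕ) :
    {w : List α | w.letterWeight = d}.Finite :=
  (List.finite_length_eq α (d none)).subset fun _ hw => (letterWeight_eq_iff.mp hw).2

end List

namespace Language

variable {α : Type} [DecidableEq α] [Finite α]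

noncomputable def genSeries (L : Language α) : MvPowerSeries (Option α) ℕ :=
  fun d => {w ∈ L | w.letterWeight = d}.ncard

theorem coeff_genSeries (L : Language α) (d : Option α →₀ ℕ) :
    MvPowerSeries.coeff d L.genSeries = {w ∈ L | w.letterWeight = d}.ncard :=
  rfl

theorem finite_setOf_mem_letterWeight_eq (L : Language α) (d : Option α →₀ ℕ) :
    {w ∈ L | w.letterWeight = d}.Finite :=
  (List.finite_setOf_letterWeight_eq d).subset fun _ hw => hw.2

theorem genSeries_add {A B : Language α} (h : Disjoint A B) :
    (A + B).genSeries = A.genSeries + B.genSeries := by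
  ext d
  have hunion : {w ∈ A + B | w.letterWeight = d} =
      {w ∈ A | w.letterWeight = d} ∪ {w ∈ B | w.letterWeight = d} :=
    Set.ext fun _ => or_and_right
  rw [map_add, coeff_genSeries, coeff_genSeries, coeff_genSeries, hunion]
  exact Set.ncard_union_eq (h.mono (Set.sep_subset _ _) (Set.sep_subset _ _))
    (finite_setOf_mem_letterWeight_eq A d) (finite_setOf_mem_letterWeight_eq B d)

open Finset in
theorem genSeries_mul {A B : Language α}
    (h : Set.InjOn (fun x : List α × List α => x.1 ++ x.2) (Set.prod A B)) :
    (A * B).genSeries = A.genSeries * B.genSeries := by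
  ext d
  let G (L : Language α) (e : Option α →₀ ℕ) := {w ∈ L | w.letterWeight = e}
  have : ∀ L e, Finite (G L e) := fun L e => (finite_setOf_mem_letterWeight_eq L e).to_subtype
  let concat (x : Σ e : antidiagonal d, G A e.1.1 × G B e.1.2) : G (A * B) d :=
    ⟨x.2.1 ++ x.2.2, ⟨x.2.1, x.2.1.2.1, x.2.2, x.2.2.2.1, rfl⟩, by
      rw [List.letterWeight_append, x.2.1.2.2, x.2.2.2.2,
        HasAntidiagonal.mem_antidiagonal.mp x.1.2]⟩
  have hconcat : Function.Bijective concat := by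
    constructor
    · rintro ⟨⟨e, he⟩, ⟨u, hu⟩, ⟨v, hv⟩⟩ ⟨⟨e', he'⟩, ⟨u', hu'⟩, ⟨v', hv'⟩⟩ huv
      obtain ⟨rfl, rfl⟩ := Prod.ext_iff.mp
        (h (x₁ := (u, v)) ⟨hu.1, hv.1⟩ (x₂ := (u', v')) ⟨hu'.1, hv'.1⟩ (congrArg Subtype.val huv))
      obtain rfl : e = e' := Prod.ext (hu.2.symm.trans hu'.2) (hv.2.symm.trans hv'.2)
      rfl
    · rintro ⟨_, ⟨u, hu, v, hv, rfl⟩, huv⟩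
      refine ⟨⟨⟨(u.letterWeight, v.letterWeight), ?_⟩, ⟨u, hu, rfl⟩, ⟨v, hv, rfl⟩⟩, rfl⟩
      rw [HasAntidiagonal.mem_antidiagonal, ← List.letterWeight_append, huv]
  rw [MvPowerSeries.coeff_mul, coeff_genSeries, ← Nat.card_coe_set_eq,
    ← Nat.card_congr (Equiv.ofBijective concat hconcat), Nat.card_sigma,
    ← Finset.sum_coe_sort (antidiagonal d)]
  simp only [Nat.card_prod]
  rfl

theorem constantCoeff_genSeries {L : Language α} (hL : [] ∉ L) :
    MvPowerSeries.constantCoeff L.genSeries = 0 := by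
  rw [← MvPowerSeries.coeff_zero_eq_constantCoeff_apply, coeff_genSeries,
    Set.ncard_eq_zero (finite_setOf_mem_letterWeight_eq L 0)]
  exact Set.eq_empty_of_forall_notMem fun w hw =>
    hL (List.eq_nil_of_letterWeight_eq_zero hw.2 ▸ hw.1)

theorem isNRational_genSeries_of_finite {L : Language α} (hL : L.Finite) :
    L.genSeries.IsNRational := by
  convert MvPowerSeries.IsNRational.poly
    (∑ w ∈ hL.toFinset, MvPolynomial.monomial w.letterWeight 1)
  ext d
  rw [coeff_genSeries, MvPolynomial.coeff_coe, MvPolynomial.coeff_sum]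
  simp only [MvPolynomial.coeff_monomial]
  rw [Finset.sum_boole, Nat.cast_id, ← Set.ncard_coe_finset, Finset.coe_filter]
  congr 1
  ext w
  exact and_congr_left fun _ => hL.mem_toFinset.symm

end Language

namespace DFA

section Paths

variable {α σ : Type*} (M : DFA α σ)

/-- `M.IsPathVia S T p w`: the word `w` is nonempty, leads `M` from `p` into `T`, and all its
intermediate states lie in `S`. -/
def IsPathVia (S T : Set σ) : σ → List α → Prop
  | _, [] => False
  | p, a :: w => w = [] ∧ M.step p a ∈ T ∨ M.step p a ∈ S ∧ IsPathVia S T (M.step p a) w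

def pathsVia (S T : Set σ) (p : σ) : Language α :=
  {w | M.IsPathVia S T p w}

variable {M} {S T : Set σ} {p s : σ}

theorem nil_notMem_pathsVia : [] ∉ M.pathsVia S T p := not_false

theorem cons_mem_pathsVia {a : α} {w : List α} :
    a :: w ∈ M.pathsVia S T p ↔
      w = [] ∧ M.step p a ∈ T ∨ M.step p a ∈ S ∧ w ∈ M.pathsVia S T (M.step p a) :=
  Iff.rfl

theorem evalFrom_mem_of_mem_pathsVia {w : List α} (hw : w ∈ M.pathsVia S T p) :
    M.evalFrom p w ∈ T := by
  induction w generalizing p with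
  | nil => exact absurd hw nil_notMem_pathsVia
  | cons a w ih =>
    rcases hw with ⟨rfl, hT⟩ | ⟨-, hw⟩
    · exact hT
    · exact ih hw

theorem evalFrom_mem_of_append_mem_pathsVia {u v : List α} (huv : u ++ v ∈ M.pathsVia S T p)
    (hu : u ≠ []) (hv : v ≠ []) : M.evalFrom p u ∈ S := by
  induction u generalizing p with
  | nil => exact absurd rfl hu
  | cons a u ih =>
    rcases huv with ⟨huv, -⟩ | ⟨hS, huv⟩
    · exact absurd (List.append_eq_nil_iff.mp huv).2 hv
    · rcases eq_or_ne u [] with rfl | hu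
      · exact hS
      · exact ih huv hu

theorem mem_pathsVia_univ {w : List α} :
    w ∈ M.pathsVia Set.univ T p ↔ w ≠ [] ∧ M.evalFrom p w ∈ T := by
  induction w generalizing p with
  | nil => simp [nil_notMem_pathsVia]
  | cons a w ih =>
    rw [cons_mem_pathsVia, ih]
    rcases eq_or_ne w [] with rfl | hw <;> simp [*]

theorem pathsVia_mono {S' : Set σ} (hS : S ⊆ S') {w : List α} (hw : w ∈ M.pathsVia S T p) :
    w ∈ M.pathsVia S' T p := by
  induction w generalizing p with
  | nil => exact absurd hw nil_notMem_pathsVia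
  | cons a w ih => exact hw.imp id fun h => ⟨hS h.1, ih h.2⟩

theorem append_mem_pathsVia {u v : List α} (hu : u ∈ M.pathsVia S {s} p) (hs : s ∈ S)
    (hv : v ∈ M.pathsVia S T s) : u ++ v ∈ M.pathsVia S T p := by
  induction u generalizing p with
  | nil => exact absurd hu nil_notMem_pathsVia
  | cons a u ih =>
    rcases hu with ⟨rfl, hstep⟩ | ⟨hS, hu⟩
    · obtain rfl : M.step p a = s := hstep
      exact Or.inr ⟨hs, hv⟩
    · exact Or.inr ⟨hS, ih hu⟩

/-- Splitting a path at its first intermediate visit to `s`. -/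
theorem pathsVia_insert :
    M.pathsVia (insert s S) T p =
      M.pathsVia S T p + M.pathsVia S {s} p * M.pathsVia (insert s S) T s := by
  ext w
  rw [Language.mem_add, Language.mem_mul]
  constructor
  · intro hw
    induction w generalizing p with
    | nil => exact absurd hw nil_notMem_pathsVia
    | cons a w ih =>
      rcases hw with ⟨rfl, hT⟩ | ⟨hS | hS, hw⟩
      · exact Or.inl (Or.inl ⟨rfl, hT⟩)
      · exact Or.inr ⟨[a], Or.inl ⟨rfl, hS⟩, w, hS ▸ hw, rfl⟩
      · rcases ih hw with hw | ⟨u, hu, v, hv, rfl⟩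
        · exact Or.inl (Or.inr ⟨hS, hw⟩)
        · exact Or.inr ⟨a :: u, Or.inr ⟨hS, hu⟩, v, hv, rfl⟩
  · rintro (hw | ⟨u, hu, v, hv, rfl⟩)
    · exact pathsVia_mono (Set.subset_insert s S) hw
    · exact append_mem_pathsVia (pathsVia_mono (Set.subset_insert s S) hu)
        (Set.mem_insert s S) hv

theorem append_notMem_pathsVia (hs : s ∉ S) {u v : List α} (hu : u ∈ M.pathsVia S {s} p)
    (hv : v ≠ []) : u ++ v ∉ M.pathsVia S T p := fun huv =>
  hs (Set.mem_singleton_iff.mp (evalFrom_mem_of_mem_pathsVia hu) ▸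
    evalFrom_mem_of_append_mem_pathsVia huv (ne_of_mem_of_not_mem hu nil_notMem_pathsVia) hv)

theorem disjoint_pathsVia_mul (hs : s ∉ S) {L : Language α} (hL : [] ∉ L) :
    Disjoint (M.pathsVia S T p) (M.pathsVia S {s} p * L) := by
  refine Set.disjoint_left.mpr fun w hw hw' => ?_
  obtain ⟨u, hu, v, hv, rfl⟩ := Language.mem_mul.mp hw'
  exact append_notMem_pathsVia hs hu (ne_of_mem_of_not_mem hv hL) hw

theorem eq_nil_of_append_mem_pathsVia (hs : s ∉ S) {u v : List α}
    (hu : u ∈ M.pathsVia S {s} p) (huv : u ++ v ∈ M.pathsVia S {s} p) : v = [] := by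
  by_contra hv
  exact append_notMem_pathsVia hs hu hv huv

theorem injOn_append_pathsVia (hs : s ∉ S) (L : Language α) :
    Set.InjOn (fun x : List α × List α => x.1 ++ x.2) (Set.prod (M.pathsVia S {s} p) L) := by
  rintro ⟨u, v⟩ ⟨hu, -⟩ ⟨u', v'⟩ ⟨hu', -⟩ (h : u ++ v = u' ++ v')
  obtain rfl : u = u' := by
    rcases List.append_eq_append_iff.mp h with ⟨w, rfl, -⟩ | ⟨w, rfl, -⟩
    · rw [eq_nil_of_append_mem_pathsVia hs hu hu', List.append_nil]
    · rw [eq_nil_of_append_mem_pathsVia hs hu' hu, List.append_nil]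
  rw [List.append_cancel_left h]

theorem finite_pathsVia_empty [Finite α] : (M.pathsVia ∅ T p).Finite := by
  refine (Set.finite_range fun a : α => [a]).subset fun w hw => ?_
  match w, hw with
  | [a], _ => exact ⟨a, rfl⟩
  | a :: b :: w, hw => exact absurd (evalFrom_mem_of_append_mem_pathsVia (u := [a]) hw
      (List.cons_ne_nil _ _) (List.cons_ne_nil _ _)) (Set.notMem_empty _)

end Paths

open Language

variable {α : Type} {σ : Type*} [DecidableEq α] [Finite α] (M : DFA α σ)

theorem isNRational_genSeries_pathsVia {S : Set σ} (hS : S.Finite) (T : Set σ) (p : σ) :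
    (M.pathsVia S T p).genSeries.IsNRational := by
  induction S, hS using Set.Finite.induction_on generalizing T p with
  | empty => exact isNRational_genSeries_of_finite finite_pathsVia_empty
  | @insert s S hs _ ih =>
    have hsplit (T : Set σ) (p : σ) : (M.pathsVia (insert s S) T p).genSeries =
        (M.pathsVia S T p).genSeries +
          (M.pathsVia S {s} p).genSeries * (M.pathsVia (insert s S) T s).genSeries := by
      rw [pathsVia_insert, genSeries_add (disjoint_pathsVia_mul hs nil_notMem_pathsVia),
        genSeries_mul (injOn_append_pathsVia hs _)]
    -- the empty word and the loops at `s` make up the star of the first returns to `s`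
    have hstar : 1 + (M.pathsVia (insert s S) {s} s).genSeries =
        1 + (M.pathsVia S {s} s).genSeries * (1 + (M.pathsVia (insert s S) {s} s).genSeries) := by
      conv_lhs => rw [hsplit]
      ring
    rw [hsplit]
    exact (ih T p).add ((ih {s} p).mul ((ih {s} s).of_eq_add_mul
      (constantCoeff_genSeries nil_notMem_pathsVia) (ih T s) hstar (hsplit T s)))

theorem isNRational_genSeries_accepts [Finite σ] : M.accepts.genSeries.IsNRational := by
  have hsplit : M.accepts = M.accepts ⊓ 1 + M.pathsVia Set.univ M.accept M.start := by
    ext w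
    rw [mem_add, mem_inf, mem_one, mem_pathsVia_univ, mem_accepts]
    rcases eq_or_ne w [] with rfl | hw <;> simp [*, eval]
  have hdisj : Disjoint (M.accepts ⊓ 1) (M.pathsVia Set.univ M.accept M.start) :=
    Set.disjoint_left.mpr fun _ hw => hw.2 ▸ nil_notMem_pathsVia
  rw [hsplit, genSeries_add hdisj]
  exact (isNRational_genSeries_of_finite ((Set.finite_singleton []).subset fun _ hw => hw.2)).add
    (M.isNRational_genSeries_pathsVia Set.finite_univ _ _)

end DFA

theorem Language.IsRegular.isNRational_genSeries {α : Type} [DecidableEq α] [Finite α]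
    {L : Language α} (hL : L.IsRegular) : L.genSeries.IsNRational := by
  obtain ⟨σ, _, M, rfl⟩ := hL
  exact M.isNRational_genSeries_accepts

theorem langGenFun_eq_genSeries (n : ℕ) (R : Language (Fin n)) :
    langGenFun n R = R.genSeries := by
  ext d
  rw [Language.coeff_genSeries, ← Nat.card_coe_set_eq]
  exact Nat.card_congr
    (Equiv.subtypeEquivRight fun _ => and_congr_right' List.letterWeight_eq_iff.symm)

/-- The multivariate generating function of a regular language, counting the occurrences of
each letter together with the total length, is ℕ-rational. -/
theorem langGenFun_isNRational (n : ℕ) (R : Language (Fin n)) (hR : R.IsRegular) :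
    (langGenFun n R).IsNRational :=
  langGenFun_eq_genSeries n R ▸ hR.isNRational_genSeries
end

section
/- For every integer N ≥ 1, the Baumslag–Solitar group BS(N,N) = ⟨a, t ∣ t a^N t^{-1} = a^N⟩ contains a subgroup of index N that is isomorphic to ℤ × F_N, the direct product of an infinite cyclic group with the free group of rank N; namely, the subgroup generated by a^N together with the elements a^i t a^{-i} for 0 ≤ i ≤ N−1. -/
/-- The Baumslag–Solitar group `BS(N,N) = ⟨a, t ∣ t a^N t⁻¹ = a^N⟩`, presented on two
generators `a` (encoded by `false`) and `t` (encoded by `true`). -/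
def BS (N : ℤ) : Type :=
  PresentedGroup ({FreeGroup.of true * FreeGroup.of false ^ N * (FreeGroup.of true)⁻¹ *
    (FreeGroup.of false ^ N)⁻¹} : Set (FreeGroup Bool))

instance (N : ℤ) : Group (BS N) := by unfold BS; infer_instance

/-- The generator `a` of `BS(N,N)`. -/
def BSa (N : ℤ) : BS N := PresentedGroup.of false

/-- The generator `t` of `BS(N,N)`. -/
def BSt (N : ℤ) : BS N := PresentedGroup.of true

/-!
The element `a^N` is central, so `(m, w) ↦ a^(N m) · w(t₀, …, t_{N-1})`, where
`tᵢ = aⁱ t a⁻ⁱ`, is a homomorphism `ℤ × F_N → BS(N,N)` onto the subgroup `K` of the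
statement. It is injective: composed with `BS(N,N) → ℤ × (F(ℤ/N) ⋊ ℤ/N)`, `a ↦ (1, 1)`,
`t ↦ (0, x₀)`, where `ℤ/N` acts by translating the basis, it becomes
`(m, w) ↦ (N m, w(x₀, …, x_{N-1}))`. Conjugation by `a` permutes the generators of `K`
(because `t_{i+N} = tᵢ`) and `t ∈ K`, so `K` is normal and `BS(N,N) = ⟨a⟩ K`. Hence `K` is
the kernel of the exponent sum of `a` modulo `N`, a subgroup of index `N`.
-/

theorem MulAut.conj_of_mem_center {G : Type*} [Group G] {z : G} (hz : z ∈ Subgroup.center G)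
    (g : G) : MulAut.conj z g = g := by
  rw [MulAut.conj_apply, ← Subgroup.mem_center_iff.mp hz g, mul_inv_cancel_right]

def FreeGroup.translationAut (A : Type*) [AddGroup A] :
    Multiplicative A →* MulAut (FreeGroup A) where
  toFun k := FreeGroup.freeGroupCongr (Equiv.addLeft k.toAdd)
  map_one' := by ext; simp
  map_mul' k l := MulEquiv.toMonoidHom_injective <| FreeGroup.ext_hom _ _ fun a => by
    simp [add_assoc]

@[simp]
theorem FreeGroup.translationAut_of {A : Type*} [AddGroup A] (k : Multiplicative A) (a : A) :
    FreeGroup.translationAut A k (FreeGroup.of a) = FreeGroup.of (k.toAdd + a) := by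
  simp [FreeGroup.translationAut]

namespace BS

open Multiplicative SemidirectProduct

section General

variable (N : ℤ)

theorem t_mul_a_zpow : BSt N * BSa N ^ N = BSa N ^ N * BSt N := by
  have h : (PresentedGroup.mk _ (FreeGroup.of true * FreeGroup.of false ^ N *
      (FreeGroup.of true)⁻¹ * (FreeGroup.of false ^ N)⁻¹) : BS N) = 1 :=
    (QuotientGroup.eq_one_iff _).mpr (Subgroup.subset_normalClosure rfl)
  simp only [map_mul, map_zpow, map_inv] at h
  exact mul_inv_eq_iff_eq_mul.mp (mul_inv_eq_one.mp h)

section Lift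

variable {N} {G : Type*} [Group G] (x y : G) (h : y * x ^ N = x ^ N * y)

def lift : BS N →* G :=
  PresentedGroup.toGroup (f := fun b => if b then y else x) <| by
    rintro r rfl
    simpa [mul_inv_eq_one, mul_inv_eq_iff_eq_mul] using h

theorem lift_a : lift x y h (BSa N) = x :=
  PresentedGroup.toGroup.of _

theorem lift_t : lift x y h (BSt N) = y :=
  PresentedGroup.toGroup.of _

end Lift

theorem closure_a_t : Subgroup.closure {BSa N, BSt N} = ⊤ :=
  eq_top_iff.mpr fun g _ => PresentedGroup.generated_by _ _
    (fun j => Subgroup.subset_closure <| by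
      cases j
      exacts [Set.mem_insert _ _, Set.mem_insert_of_mem _ rfl]) g

theorem a_zpow_mem_center : BSa N ^ N ∈ Subgroup.center (BS N) := by
  rw [← Subgroup.centralizer_univ, ← Subgroup.coe_top, ← closure_a_t,
    Subgroup.centralizer_closure, Subgroup.mem_centralizer_iff]
  rintro g (rfl | rfl)
  · exact (Commute.self_zpow _ N).eq
  · exact t_mul_a_zpow N

def conjT (i : ℤ) : BS N := MulAut.conj (BSa N ^ i) (BSt N)

theorem conj_a_conjT (i : ℤ) : MulAut.conj (BSa N) (conjT N i) = conjT N (1 + i) := by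
  rw [conjT, conjT, ← MulAut.mul_apply, ← map_mul, zpow_one_add]

theorem conjT_add_mul (i k : ℤ) : conjT N (i + N * k) = conjT N i := by
  rw [conjT, conjT, zpow_add, zpow_mul, map_mul, MulAut.mul_apply,
    MulAut.conj_of_mem_center (zpow_mem (a_zpow_mem_center N) k)]

def zProdFreeSubgroup : Subgroup (BS N) :=
  Subgroup.closure ({BSa N ^ N} ∪ Set.range (conjT N))

theorem a_zpow_mem_zProdFreeSubgroup : BSa N ^ N ∈ zProdFreeSubgroup N :=
  Subgroup.subset_closure (Set.mem_union_left _ rfl)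

theorem conjT_mem_zProdFreeSubgroup (i : ℤ) : conjT N i ∈ zProdFreeSubgroup N :=
  Subgroup.subset_closure (Set.mem_union_right _ ⟨i, rfl⟩)

theorem t_mem_zProdFreeSubgroup : BSt N ∈ zProdFreeSubgroup N := by
  simpa [conjT] using conjT_mem_zProdFreeSubgroup N 0

theorem conj_a_image_generators :
    MulAut.conj (BSa N) '' ({BSa N ^ N} ∪ Set.range (conjT N)) =
      {BSa N ^ N} ∪ Set.range (conjT N) := by
  rw [Set.image_union, Set.image_singleton, ← Set.range_comp, MulAut.conj_apply,
    (Commute.self_zpow _ N).eq, mul_inv_cancel_right]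
  have : MulAut.conj (BSa N) ∘ conjT N = conjT N ∘ Equiv.addLeft 1 :=
    funext (conj_a_conjT N)
  rw [this, (Equiv.addLeft 1).surjective.range_comp]

instance zProdFreeSubgroup_normal : (zProdFreeSubgroup N).Normal := by
  rw [← Subgroup.normalizer_eq_top_iff, eq_top_iff, ← closure_a_t, Subgroup.closure_le]
  rintro g (rfl | rfl)
  · exact Subgroup.normalizer_le_normalizer_closure _
      (Subgroup.mem_normalizer_iff_conj_image_eq.mpr (conj_a_image_generators N))
  · exact Subgroup.le_normalizer (t_mem_zProdFreeSubgroup N)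

theorem zpowers_a_sup_zProdFreeSubgroup :
    Subgroup.zpowers (BSa N) ⊔ zProdFreeSubgroup N = ⊤ := by
  rw [eq_top_iff, ← closure_a_t, Subgroup.closure_le, Set.insert_subset_iff,
    Set.singleton_subset_iff]
  exact ⟨le_sup_left (b := zProdFreeSubgroup N) (Subgroup.mem_zpowers _),
    le_sup_right (a := Subgroup.zpowers (BSa N)) (t_mem_zProdFreeSubgroup N)⟩

theorem exists_a_zpow_inv_mul_mem (g : BS N) :
    ∃ m : ℤ, (BSa N ^ m)⁻¹ * g ∈ zProdFreeSubgroup N := by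
  have hg : g ∈ ((Subgroup.zpowers (BSa N) ⊔ zProdFreeSubgroup N : Subgroup (BS N)) :
      Set (BS N)) := by
    rw [zpowers_a_sup_zProdFreeSubgroup]
    trivial
  rw [Subgroup.mul_normal] at hg
  obtain ⟨_, ⟨m, rfl⟩, k, hk, rfl⟩ := hg
  exact ⟨m, by simpa using hk⟩

def exponentSumA : BS N →* Multiplicative ℤ :=
  lift (ofAdd 1) 1 (by rw [one_mul, mul_one])

@[simp]
theorem exponentSumA_a_zpow (m : ℤ) : exponentSumA N (BSa N ^ m) = ofAdd m := by
  rw [map_zpow, exponentSumA, lift_a, ← ofAdd_zsmul, smul_eq_mul, mul_one]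

@[simp]
theorem exponentSumA_conjT (i : ℤ) : exponentSumA N (conjT N i) = 1 := by
  rw [conjT, MulAut.conj_apply, map_mul, map_mul, map_inv, mul_inv_cancel_comm, exponentSumA,
    lift_t]

end General

variable (N : ℕ)

def toSemidirect :
    BS N →* FreeGroup (ZMod N) ⋊[FreeGroup.translationAut (ZMod N)] Multiplicative (ZMod N) :=
  lift (inr (ofAdd 1)) (inl (FreeGroup.of 0)) <| by
    rw [zpow_natCast, ← map_pow, ← ofAdd_nsmul, nsmul_one, ZMod.natCast_self, ofAdd_zero,
      map_one, one_mul, mul_one]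

theorem toSemidirect_a_zpow (m : ℤ) :
    toSemidirect N (BSa N ^ m) = inr (ofAdd (m : ZMod N)) := by
  rw [map_zpow, toSemidirect, lift_a, ← map_zpow, ← ofAdd_zsmul, zsmul_one]

theorem toSemidirect_conjT (i : ℤ) :
    toSemidirect N (conjT N i) = inl (FreeGroup.of (i : ZMod N)) := by
  rw [conjT, MulAut.conj_apply, map_mul, map_mul, map_inv, toSemidirect_a_zpow, toSemidirect,
    lift_t, ← map_inv, ← inl_aut, FreeGroup.translationAut_of, toAdd_ofAdd, add_zero]

theorem range_conjT_fin [NeZero N] :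
    Set.range (fun i : Fin N => conjT N i) = Set.range (conjT N) := by
  refine (Set.range_subset_iff.mpr fun i => Set.mem_range_self _).antisymm ?_
  rintro _ ⟨j, rfl⟩
  have hN : (0 : ℤ) < N := by exact_mod_cast Nat.pos_of_neZero N
  refine Set.mem_range.mpr ⟨⟨(j % N).toNat, by have := Int.emod_lt_of_pos j hN; omega⟩, ?_⟩
  rw [Fin.val_mk, Int.toNat_of_nonneg (Int.emod_nonneg j hN.ne'),
    ← conjT_add_mul N (j % N) (j / N), Int.emod_add_mul_ediv]

def zProdFreeHom : Multiplicative ℤ × FreeGroup (Fin N) →* BS N :=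
  MonoidHom.noncommCoprod (zpowersHom _ (BSa N ^ (N : ℤ)))
    (FreeGroup.lift fun i : Fin N => conjT N i)
    fun m _ => (zpow_mem (a_zpow_mem_center N) m.toAdd).comm _

theorem zProdFreeHom_apply (m : Multiplicative ℤ) (w : FreeGroup (Fin N)) :
    zProdFreeHom N (m, w) =
      BSa N ^ (N * m.toAdd) * FreeGroup.lift (fun i : Fin N => conjT N i) w := by
  rw [zpow_mul]
  rfl

theorem range_zProdFreeHom [NeZero N] : (zProdFreeHom N).range = zProdFreeSubgroup N := by
  refine (MonoidHom.noncommCoprod_range _ _ _).trans ?_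
  rw [FreeGroup.range_lift_eq_closure, range_conjT_fin, zProdFreeSubgroup,
    Subgroup.closure_union, ← Subgroup.zpowers_eq_closure]
  rfl

theorem exponentSumA_zProdFreeHom (m : Multiplicative ℤ) (w : FreeGroup (Fin N)) :
    exponentSumA N (zProdFreeHom N (m, w)) = ofAdd (N * m.toAdd) := by
  have : (exponentSumA N).comp (FreeGroup.lift fun i : Fin N => conjT N i) = 1 :=
    FreeGroup.ext_hom _ _ fun i => by simp
  rw [zProdFreeHom_apply, map_mul, exponentSumA_a_zpow, ← MonoidHom.comp_apply, this,
    MonoidHom.one_apply, mul_one]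

theorem toSemidirect_zProdFreeHom (m : Multiplicative ℤ) (w : FreeGroup (Fin N)) :
    toSemidirect N (zProdFreeHom N (m, w)) =
      inl (FreeGroup.map (fun i : Fin N => (i : ZMod N)) w) := by
  have : (toSemidirect N).comp (FreeGroup.lift fun i : Fin N => conjT N i) =
      inl.comp (FreeGroup.map fun i : Fin N => (i : ZMod N)) :=
    FreeGroup.ext_hom _ _ fun i => by simp [toSemidirect_conjT]
  rw [zProdFreeHom_apply, map_mul, toSemidirect_a_zpow, ← MonoidHom.comp_apply, this]
  simp

theorem zProdFreeHom_injective [NeZero N] : Function.Injective (zProdFreeHom N) := by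
  rw [injective_iff_map_eq_one]
  rintro ⟨m, w⟩ h
  have hm := congrArg (exponentSumA N) h
  have hw := congrArg (toSemidirect N) h
  rw [exponentSumA_zProdFreeHom, map_one, ofAdd_eq_one, mul_eq_zero] at hm
  rw [toSemidirect_zProdFreeHom, map_one, ← map_one inl, inl_injective.eq_iff,
    ← map_one (FreeGroup.map _), (FreeGroup.map_injective _).eq_iff] at hw
  · rw [toAdd_eq_zero.mp (hm.resolve_left (by exact_mod_cast NeZero.ne N)), hw, Prod.mk_one_one]
  · exact fun i j h => Fin.ext (by simpa [ZMod.natCast_eq_natCast_iff', Nat.mod_eq_of_lt] using h)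

def exponentSumAMod : BS N →* Multiplicative (ZMod N) :=
  (Int.castAddHom (ZMod N)).toMultiplicative.comp (exponentSumA N)

theorem exponentSumAMod_a_zpow (m : ℤ) :
    exponentSumAMod N (BSa N ^ m) = ofAdd (m : ZMod N) := by
  simp [exponentSumAMod]

theorem zProdFreeSubgroup_le_ker : zProdFreeSubgroup N ≤ (exponentSumAMod N).ker := by
  rw [zProdFreeSubgroup, Subgroup.closure_le]
  rintro _ (rfl | ⟨i, rfl⟩)
  · rw [SetLike.mem_coe, MonoidHom.mem_ker, exponentSumAMod_a_zpow, Int.cast_natCast,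
      ZMod.natCast_self, ofAdd_zero]
  · simp [exponentSumAMod]

theorem ker_le_zProdFreeSubgroup : (exponentSumAMod N).ker ≤ zProdFreeSubgroup N := by
  intro g hg
  obtain ⟨m, hm⟩ := exists_a_zpow_inv_mul_mem N g
  have hdvd : (N : ℤ) ∣ m := by
    have := zProdFreeSubgroup_le_ker N hm
    rwa [MonoidHom.mem_ker, map_mul, MonoidHom.mem_ker.mp hg, mul_one, map_inv, inv_eq_one,
      exponentSumAMod_a_zpow, ofAdd_eq_one, ZMod.intCast_zmod_eq_zero_iff_dvd] at this
  obtain ⟨q, rfl⟩ := hdvd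
  rw [zpow_mul] at hm
  rw [← mul_inv_cancel_left ((BSa N ^ (N : ℤ)) ^ q) g]
  exact mul_mem (zpow_mem (a_zpow_mem_zProdFreeSubgroup N) q) hm

theorem index_zProdFreeSubgroup : (zProdFreeSubgroup N).index = N := by
  rw [le_antisymm (zProdFreeSubgroup_le_ker N) (ker_le_zProdFreeSubgroup N), Subgroup.index_ker]
  have hsurj : Function.Surjective (exponentSumAMod N) := fun x => by
    obtain ⟨m, hm⟩ := ZMod.intCast_surjective x.toAdd
    exact ⟨BSa N ^ m, by rw [exponentSumAMod_a_zpow, hm, ofAdd_toAdd]⟩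
  rw [MonoidHom.range_eq_top.mpr hsurj, Subgroup.card_top, Nat.card_congr toAdd, Nat.card_zmod]

end BS

/-- For `N ≥ 1`, the subgroup of `BS(N,N)` generated by `a^N` and the elements
`a^i t a^{-i}` for `0 ≤ i ≤ N-1` has index `N` and is isomorphic to `ℤ × F_N`. -/
theorem BS_virtually_Z_times_free (N : ℕ) (hN : 1 ≤ N)
    (K : Subgroup (BS N))
    (hK : K = Subgroup.closure
      ({BSa N ^ N} ∪ Set.range (fun i : Fin N => BSa N ^ (i : ℕ) * BSt N * (BSa N ^ (i : ℕ))⁻¹))) :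
    K.index = N ∧ Nonempty (K ≃* Multiplicative ℤ × FreeGroup (Fin N)) := by
  have : NeZero N := ⟨by omega⟩
  obtain rfl : K = BS.zProdFreeSubgroup N := by
    rw [hK, BS.zProdFreeSubgroup, ← BS.range_conjT_fin]
    simp only [BS.conjT, MulAut.conj_apply, zpow_natCast]
  refine ⟨BS.index_zProdFreeSubgroup N, ⟨?_⟩⟩
  rw [← BS.range_zProdFreeHom]
  exact (MonoidHom.ofInjective (BS.zProdFreeHom_injective N)).symm
end

section
/- For every integer N ≥ 1, in the Baumslag–Solitar group BS(N,N) = ⟨a, t ∣ t a^N t^{-1} = a^N⟩, the N elements t, a t a^{-1}, a^2 t a^{-2}, ..., a^{N-1} t a^{1-N} generate a subgroup that is a free group of rank N, freely generated by these elements. -/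
/-!
Map `BS(N,N)` to `F(ℤ/N) ⋊ ℤ/N`, where `ℤ/N` permutes the free generators by translation,
via `a ↦ 1 ∈ ℤ/N` and `t ↦ x₀`. This is well defined because `a^N ↦ 0` acts trivially, and it
sends `aⁱ t a⁻ⁱ` to the free generator `xᵢ`. For `0 ≤ i < N` these are distinct, so the
composite `F_N → BS(N,N) → F(ℤ/N)` is injective, and hence so is `F_N → BS(N,N)`.
-/

namespace FreeGroup

def permCongrHom {α : Type*} : Equiv.Perm α →* MulAut (FreeGroup α) where
  toFun := freeGroupCongr
  map_one' := freeGroupCongr_refl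
  map_mul' e f := (freeGroupCongr_trans f e).symm

abbrev SemidirectOfAction (G α : Type*) [Group G] [MulAction G α] :=
  FreeGroup α ⋊[permCongrHom.comp (MulAction.toPermHom G α)] G

theorem SemidirectOfAction.conj_inl_of {G α : Type*} [Group G] [MulAction G α] (g : G) (x : α) :
    (SemidirectProduct.inr g * SemidirectProduct.inl (of x) * (SemidirectProduct.inr g)⁻¹ :
      SemidirectOfAction G α) = SemidirectProduct.inl (of (g • x)) := by
  rw [← _root_.map_inv, ← SemidirectProduct.inl_aut]
  rfl

end FreeGroup

open SemidirectProduct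

def BS.toTranslationProduct (N : ℕ) :
    BS N →* FreeGroup.SemidirectOfAction (Multiplicative (ZMod N)) (ZMod N) :=
  PresentedGroup.toGroup (f := fun b => if b then inl (FreeGroup.of 0) else inr (.ofAdd 1)) <| by
    have ha_pow : (inr (Multiplicative.ofAdd 1) :
        FreeGroup.SemidirectOfAction (Multiplicative (ZMod N)) (ZMod N)) ^ N = 1 := by
      rw [← map_pow, ← ofAdd_nsmul, nsmul_one, ZMod.natCast_self, ofAdd_zero, map_one]
    rintro r rfl
    simp [ha_pow]

theorem BS.toTranslationProduct_conj (N i : ℕ) :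
    BS.toTranslationProduct N (BSa N ^ i * BSt N * (BSa N ^ i)⁻¹) =
      inl (FreeGroup.of (i : ZMod N)) := by
  have ha : BS.toTranslationProduct N (BSa N) = inr (.ofAdd 1) := PresentedGroup.toGroup.of _
  have ht : BS.toTranslationProduct N (BSt N) = inl (FreeGroup.of 0) := PresentedGroup.toGroup.of _
  rw [map_mul, map_mul, map_inv, map_pow, ha, ht, ← map_pow,
    FreeGroup.SemidirectOfAction.conj_inl_of, ← ofAdd_nsmul, nsmul_one, ofAdd_smul, vadd_eq_add,
    add_zero]

theorem BS_free_subgroup_general (N : ℕ) :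
    Function.Injective
      (FreeGroup.lift (fun i : Fin N => BSa N ^ (i : ℕ) * BSt N * (BSa N ^ (i : ℕ))⁻¹) :
        FreeGroup (Fin N) →* BS N) := by
  have hcast : Function.Injective (fun i : Fin N => ((i : ℕ) : ZMod N)) := fun i j hij => by
    rw [ZMod.natCast_eq_natCast_iff', Nat.mod_eq_of_lt i.isLt, Nat.mod_eq_of_lt j.isLt] at hij
    exact Fin.ext hij
  have hcomp : (BS.toTranslationProduct N).comp
      (FreeGroup.lift fun i : Fin N => BSa N ^ (i : ℕ) * BSt N * (BSa N ^ (i : ℕ))⁻¹) =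
      inl.comp (FreeGroup.map fun i : Fin N => ((i : ℕ) : ZMod N)) :=
    FreeGroup.ext_hom _ _ fun i => by simp [BS.toTranslationProduct_conj]
  refine Function.Injective.of_comp (f := BS.toTranslationProduct N) ?_
  rw [← MonoidHom.coe_comp, hcomp, MonoidHom.coe_comp]
  exact inl_injective.comp (FreeGroup.map_injective hcast)

/-- For `N ≥ 1`, the elements `t, a t a⁻¹, …, a^{N-1} t a^{1-N}` of `BS(N,N)` freely
generate a free subgroup of rank `N`: the homomorphism from `F_N` sending the `i`-th free
generator to `a^i t a^{-i}` is injective. -/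
theorem BS_free_subgroup (N : ℕ) (hN : 1 ≤ N) :
    Function.Injective
      (FreeGroup.lift (fun i : Fin N => BSa N ^ (i : ℕ) * BSt N * (BSa N ^ (i : ℕ))⁻¹) :
        FreeGroup (Fin N) →* BS N) :=
  BS_free_subgroup_general N
end

section
/- Let G be a group with finite monoid generating set X, and let H be a subgroup of G of finite index. Then the language { w ∈ X* : the element of G represented by w lies in H } is a regular language over the alphabet X. -/
/-!
Reading a word letter by letter, it suffices to remember the coset of the prefix read so far; since
`H` has finite index there are finitely many cosets, so this is a finite automaton. The state after
reading `w` is `(w.prod)⁻¹ • H` in `G ⧸ H`, the inverse turning the right multiplication by each new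
letter into the left action of `G` on its left cosets.
-/

namespace Language

theorem IsRegular.preimage_map {α β : Type*} {L : Language β} (hL : L.IsRegular) (f : α → β) :
    IsRegular (List.map f ⁻¹' L : Language α) := by
  obtain ⟨σ, _, M, rfl⟩ := hL
  exact ⟨σ, inferInstance, M.comap f, M.accepts_comap f⟩

end Language

namespace Subgroup

variable {G : Type*} [Group G] (H : Subgroup G)

def cosetDFA : DFA G (G ⧸ H) where
  step q g := g⁻¹ • q
  start := ((1 : G) : G ⧸ H)
  accept := {((1 : G) : G ⧸ H)}

theorem cosetDFA_evalFrom (q : G ⧸ H) (w : List G) :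
    H.cosetDFA.evalFrom q w = w.prod⁻¹ • q := by
  induction w generalizing q with
  | nil => simp
  | cons g w ih =>
    rw [DFA.evalFrom_cons, ih, List.prod_cons, mul_inv_rev, mul_smul]
    rfl

theorem cosetDFA_accepts : H.cosetDFA.accepts = {w : List G | w.prod ∈ H} := by
  ext w
  change _ ↔ w.prod ∈ H
  rw [DFA.mem_accepts, DFA.eval, cosetDFA_evalFrom]
  simp [cosetDFA, QuotientGroup.eq]

theorem isRegular_setOf_prod_mem [H.FiniteIndex] :
    Language.IsRegular {w : List G | w.prod ∈ H} :=
  have : Fintype (G ⧸ H) := Fintype.ofFinite _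
  Language.isRegular_iff.mpr ⟨G ⧸ H, inferInstance, H.cosetDFA, H.cosetDFA_accepts⟩

end Subgroup

theorem coset_language_isRegular_general {G : Type} [Group G]
    (X : Finset G)
    (H : Subgroup G) (hfin : H.FiniteIndex) :
    Language.IsRegular
      {w : List {x : G // x ∈ X} | (w.map Subtype.val).prod ∈ H} :=
  H.isRegular_setOf_prod_mem.preimage_map Subtype.val

/-- Let `G` be a group with finite monoid generating set `X` and let `H` be a finite-index
subgroup of `G`. Then the language of words over `X` representing an element of `H` is a
regular language. -/
theorem coset_language_isRegular {G : Type} [Group G]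
    (X : Finset G) (hX : Submonoid.closure (X : Set G) = ⊤)
    (H : Subgroup G) (hfin : H.FiniteIndex) :
    Language.IsRegular
      {w : List {x : G // x ∈ X} | (w.map Subtype.val).prod ∈ H} :=
  coset_language_isRegular_general X H hfin
end
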